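/- arXiv:1603.00326 — 2 statements merged into one kernel-verified Lean document; each statement's English description precedes it below -/
import Mathlib

section
/- Let G be a graph in the class W₂ and S an independent set of G with |S| < α(G). Then the localization G_S is again in the class W₂. -/
open Finset
open Classical

noncomputable section

variable {V : Type*}

/-- An (abstract) simplicial complex on `V`, given as a finite set of finite faces:
nonvoid (contains the empty face) and closed under taking subsets. -/
def IsComplex (Δ : Finset (Finset V)) : Prop :=
  ∅ ∈ Δ ∧ ∀ F ∈ Δ, ∀ H ⊆ F, H ∈ Δ

/-- The reduced Euler characteristic `χ̃(Δ) = Σ_{F ∈ Δ} (-1)^{|F| - 1}`. -/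
def chiT (Δ : Finset (Finset V)) : ℤ :=
  ∑ F ∈ Δ, (-1 : ℤ) ^ (F.card + 1)

/-- The link of a face `F` in `Δ`. -/
def link (Δ : Finset (Finset V)) (F : Finset V) : Finset (Finset V) :=
  Δ.filter (fun H => H ∪ F ∈ Δ ∧ H ∩ F = ∅)

/-- The facets (maximal faces) of `Δ`. -/
def facets (Δ : Finset (Finset V)) : Finset (Finset V) :=
  Δ.filter (fun F => ∀ H ∈ Δ, F ⊆ H → F = H)

/-- `Δ` is pure: all facets have the same cardinality. -/
def PureC (Δ : Finset (Finset V)) : Prop :=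
  ∀ F ∈ facets Δ, ∀ H ∈ facets Δ, F.card = H.card

/-- One more than the dimension of `Δ`: the maximal cardinality of a face. -/
def maxCard (Δ : Finset (Finset V)) : ℕ := Δ.sup Finset.card

/-- The dimension of `Δ` as an integer (`-1` for `Δ = {∅}`). -/
def dimC (Δ : Finset (Finset V)) : ℤ := (maxCard Δ : ℤ) - 1

/-- `Δ` is an Euler complex: pure, and every link has reduced Euler characteristic
`(-1)^{dim}` (note `(-1)^{dim lk} = (-1)^{maxCard lk + 1}`). -/
def Eulerian (Δ : Finset (Finset V)) : Prop :=
  PureC Δ ∧ ∀ F ∈ Δ, chiT (link Δ F) = (-1 : ℤ) ^ (maxCard (link Δ F) + 1)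

/-- `Δ` is semi-Eulerian: the link of each vertex is Eulerian. -/
def SemiEulerian (Δ : Finset (Finset V)) : Prop :=
  ∀ x : V, {x} ∈ Δ → Eulerian (link Δ {x})

/-- The independence complex of a graph `G`: faces are the independent sets. -/
def indepC (G : SimpleGraph V) [Fintype V] : Finset (Finset V) :=
  Finset.univ.filter (fun s => ∀ a ∈ s, ∀ b ∈ s, ¬ G.Adj a b)

/-- The independence number `α(G)`. -/
def indNum (G : SimpleGraph V) [Fintype V] : ℕ := (indepC G).sup Finset.card

/-- `G` is well-covered: every maximal independent set has cardinality `α(G)`. -/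
def WellCovered (G : SimpleGraph V) [Fintype V] : Prop :=
  ∀ s ∈ indepC G, (∀ t ∈ indepC G, s ⊆ t → s = t) → s.card = indNum G

/-- The vertex set of the localization `G_S = G \ (S ∪ N_G(S))`. -/
def locSet (G : SimpleGraph V) (S : Finset V) : Set V :=
  {v | v ∉ S ∧ ∀ u ∈ S, ¬ G.Adj v u}

/-- The localization `G_S`, as an induced subgraph. -/
def locG (G : SimpleGraph V) (S : Finset V) : SimpleGraph (locSet G S) :=
  G.induce (locSet G S)

/-- The deletion `G ∖ v`, as an induced subgraph. -/
def Gdel (G : SimpleGraph V) (v : V) : SimpleGraph {u : V // u ≠ v} :=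
  G.induce {u | u ≠ v}

/-- `G` belongs to the class `W₂`: it is well-covered and for every vertex `v`,
`G ∖ v` is well-covered with `α(G ∖ v) = α(G)`. -/
def InW2 (G : SimpleGraph V) [Fintype V] : Prop :=
  WellCovered G ∧ ∀ v : V, WellCovered (Gdel G v) ∧ indNum (Gdel G v) = indNum G

/-- `δ*(v)`: the number of non-isolated vertices of the induced subgraph `H[N_H(v)]`. -/
def deltaStarV {T : Type*} (H : SimpleGraph T) [Fintype T] (v : T) : ℕ :=
  (Finset.univ.filter (fun u => H.Adj v u ∧ ∃ w, H.Adj v w ∧ H.Adj u w)).card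

/-- `2K₂`: two disjoint edges. -/
def twoK2 : SimpleGraph (Fin 4) := SimpleGraph.fromEdgeSet {s(0, 1), s(2, 3)}

/-- The join `G * H` of two disjoint graphs. -/
def joinG {α β : Type*} (G : SimpleGraph α) (H : SimpleGraph β) : SimpleGraph (α ⊕ β) where
  Adj x y :=
    match x, y with
    | Sum.inl a, Sum.inl b => G.Adj a b
    | Sum.inr a, Sum.inr b => H.Adj a b
    | Sum.inl _, Sum.inr _ => True
    | Sum.inr _, Sum.inl _ => True
  symm := ⟨by
    rintro (a | a) (b | b) h
    · exact G.adj_symm h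
    · trivial
    · trivial
    · exact H.adj_symm h⟩
  loopless := ⟨by
    rintro (a | a) h
    · exact G.irrefl h
    · exact H.irrefl h⟩

/-- `G` is pseudo-planar: for every independent set `S`, `δ*(G_S) ≤ 5` and
`G_S` is not isomorphic to `2K₂ * 2K₂`. -/
def PseudoPlanar (G : SimpleGraph V) [Fintype V] : Prop :=
  ∀ S ∈ indepC G,
    ((locSet G S).Nonempty → ∃ v : locSet G S, deltaStarV (locG G S) v ≤ 5) ∧
    IsEmpty (locG G S ≃g joinG twoK2 twoK2)

/-- `H` is a minor of `G`: there are disjoint nonempty connected branch sets in `G`,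
one for each vertex of `H`, with edges between branch sets of adjacent vertices. -/
def IsMinor {α β : Type*} (H : SimpleGraph β) (G : SimpleGraph α) : Prop :=
  ∃ B : β → Set α,
    (∀ u, (B u).Nonempty) ∧ (∀ u, (G.induce (B u)).Connected) ∧
    (∀ u w, u ≠ w → Disjoint (B u) (B w)) ∧
    (∀ u w, H.Adj u w → ∃ x ∈ B u, ∃ y ∈ B w, G.Adj x y)

def K5 : SimpleGraph (Fin 5) := ⊤

def K33 : SimpleGraph (Fin 3 ⊕ Fin 3) := completeBipartiteGraph (Fin 3) (Fin 3)

/-- Planarity via Wagner's theorem: no `K₅` minor and no `K_{3,3}` minor. -/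
def Planar (G : SimpleGraph V) : Prop := ¬ IsMinor K5 G ∧ ¬ IsMinor K33 G

/-- The 5-cycle on `Fin 5`. -/
def C5 : SimpleGraph (Fin 5) :=
  SimpleGraph.fromEdgeSet {s(0, 1), s(1, 2), s(2, 3), s(3, 4), s(4, 0)}

/-- A pentagon (5-cycle) with exactly one chord. -/
def pentChord : SimpleGraph (Fin 5) :=
  SimpleGraph.fromEdgeSet {s(0, 1), s(1, 2), s(2, 3), s(3, 4), s(4, 0), s(1, 3)}

/-- The bowtie: two triangles sharing exactly one vertex. -/
def bowtie : SimpleGraph (Fin 5) :=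
  SimpleGraph.fromEdgeSet {s(0, 1), s(1, 2), s(2, 0), s(1, 3), s(3, 4), s(4, 1)}

/-- The possible chords of the 5-cycle `C5`. -/
def chordSet : Finset (Sym2 (Fin 5)) := {s(0, 2), s(0, 3), s(1, 3), s(1, 4), s(2, 4)}

/-- The simplicial boundary map on chains (with coefficients in `k`),
sending `e_F ↦ Σ_{v ∈ F} (-1)^{pos of v in F} e_{F ∖ v}`. -/
def bdry (k : Type*) [Field k] [LinearOrder V] : (Finset V →₀ k) →ₗ[k] (Finset V →₀ k) :=
  Finsupp.lsum k fun F => (LinearMap.id : k →ₗ[k] k).smulRight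
    (∑ v ∈ F, ((-1 : k) ^ (F.filter (fun w => w < v)).card) • Finsupp.single (F.erase v) (1 : k))

/-- The submodule of `c`-chains of `Δ`: spanned by basis elements of faces of cardinality `c`. -/
def chainsSub (k : Type*) [Field k] (Δ : Finset (Finset V)) (c : ℕ) :
    Submodule k (Finset V →₀ k) :=
  Submodule.span k {x | ∃ F ∈ Δ, F.card = c ∧ x = Finsupp.single F (1 : k)}

/-- Vanishing of the reduced simplicial homology `H̃_{c-1}(Δ; k)`:
every cycle supported on faces of cardinality `c` is a boundary. -/
def HVanish (k : Type*) [Field k] [LinearOrder V] (Δ : Finset (Finset V)) (c : ℕ) : Prop :=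
  ∀ ω ∈ chainsSub k Δ c, bdry k ω = 0 → ∃ η ∈ chainsSub k Δ (c + 1), bdry k η = ω

/-- Cohen–Macaulayness of `Δ` over `k`, via Reisner's criterion:
`H̃_i(lk_Δ F; k) = 0` for all faces `F` and all `i < dim lk_Δ F`. -/
def IsCM (k : Type*) [Field k] [LinearOrder V] (Δ : Finset (Finset V)) : Prop :=
  ∀ F ∈ Δ, ∀ c : ℕ, (c : ℤ) - 1 < dimC (link Δ F) → HVanish k (link Δ F) c

/-- The core of `Δ`: the restriction of `Δ` to the vertices `x` with `st_Δ(x) ≠ Δ`. -/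
def coreC (Δ : Finset (Finset V)) : Finset (Finset V) :=
  Δ.filter (fun F => ∀ x ∈ F, ∃ H ∈ Δ, H ∪ {x} ∉ Δ)

/-- Gorensteinness of `Δ` over `k`, via Stanley's criterion:
`core Δ` is a Cohen–Macaulay Euler complex. -/
def IsGor (k : Type*) [Field k] [LinearOrder V] (Δ : Finset (Finset V)) : Prop :=
  IsCM k (coreC Δ) ∧ Eulerian (coreC Δ)

/-- Connectedness of `Δ` (all vertices of `V` being vertices of `Δ`):
its 1-skeleton graph is connected. -/
def ComplexConnected (Δ : Finset (Finset V)) : Prop :=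
  (SimpleGraph.fromRel fun a b => ({a, b} : Finset V) ∈ Δ).Connected

/-- `Δ` is connected in codimension one. -/
def ConnCodimOne (Δ : Finset (Finset V)) : Prop :=
  ∀ F ∈ facets Δ, ∀ H ∈ facets Δ,
    Relation.ReflTransGen
      (fun A B => A ∈ facets Δ ∧ B ∈ facets Δ ∧ (A ∩ B).card = maxCard Δ - 1) F H

/-- The graph obtained from `H` and a vertex `x` by adding new vertices `a, b, c`
(coded `0, 1, 2 : Fin 3`), joining `a` to `b` and to every neighbor of `x`,
`b` to `c`, and `c` to `x`. -/
def extGraph (H : SimpleGraph V) (x : V) : SimpleGraph (V ⊕ Fin 3) :=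
  SimpleGraph.fromRel fun p q =>
    match p, q with
    | Sum.inl u, Sum.inl w => H.Adj u w
    | Sum.inl u, Sum.inr i => (i = 0 ∧ H.Adj u x) ∨ (i = 2 ∧ u = x)
    | Sum.inr i, Sum.inr j => (i = 0 ∧ j = 1) ∨ (i = 1 ∧ j = 2)
    | Sum.inr _, Sum.inl _ => False

end

/-!
If `G` is well-covered and `S` is independent, then for every maximal independent set `t` of
`G_S`, the set `t ∪ S` is maximal independent in `G`: a vertex outside `S ∪ N(S)` that could be
added to `t ∪ S` could already be added to `t`. Hence all maximal independent sets of `G_S` have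
size `α(G) - |S|`, so `G_S` is well-covered with `α(G_S) = α(G) - |S|`. For the `W₂` condition,
note that deleting a vertex `v` of `G_S` commutes with localizing: `G_S ∖ v ≅ (G ∖ v)_S`. Since
`G ∖ v` is well-covered with `α(G ∖ v) = α(G)`, the first part applied to `G ∖ v` shows that
`G_S ∖ v` is well-covered with `α(G_S ∖ v) = α(G) - |S| = α(G_S)`.
-/

section Independence

variable {V W : Type*} [Fintype V] [Fintype W] {G : SimpleGraph V} {H : SimpleGraph W}

lemma mem_indepC_iff {s : Finset V} : s ∈ indepC G ↔ ∀ a ∈ s, ∀ b ∈ s, ¬ G.Adj a b := by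
  simp [indepC]

lemma card_le_indNum {s : Finset V} (hs : s ∈ indepC G) : s.card ≤ indNum G :=
  Finset.le_sup hs

lemma exists_card_eq_indNum : ∃ s ∈ indepC G, s.card = indNum G := by
  obtain ⟨s, hs, h⟩ := Finset.exists_mem_eq_sup (indepC G) ⟨∅, by simp [indepC]⟩ Finset.card
  exact ⟨s, hs, h.symm⟩

lemma exists_maximal_superset_mem_indepC {s : Finset V} (hs : s ∈ indepC G) :
    ∃ t ∈ indepC G, s ⊆ t ∧ ∀ u ∈ indepC G, t ⊆ u → t = u := by
  obtain ⟨t, ht, htmax⟩ :=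
    ((indepC G).filter (s ⊆ ·)).exists_max_image Finset.card ⟨s, by simp [hs]⟩
  rw [Finset.mem_filter] at ht
  refine ⟨t, ht.1, ht.2, fun u hu htu => ?_⟩
  exact Finset.eq_of_subset_of_card_le htu (htmax u (by simp [hu, ht.2.trans htu]))

lemma wellCovered_of_forall_maximal_card {k : ℕ}
    (h : ∀ s ∈ indepC G, (∀ t ∈ indepC G, s ⊆ t → s = t) → s.card = k) :
    WellCovered G ∧ indNum G = k := by
  obtain ⟨s, hs, hs_card⟩ := exists_card_eq_indNum (G := G)
  obtain ⟨t, ht, hst, ht_max⟩ := exists_maximal_superset_mem_indepC hs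
  have ht_card : t.card = indNum G :=
    le_antisymm (card_le_indNum ht) (hs_card ▸ Finset.card_le_card hst)
  have hk : indNum G = k := ht_card ▸ h t ht ht_max
  exact ⟨fun s hs hs_max => hk ▸ h s hs hs_max, hk⟩

lemma map_mem_indepC_iff (e : G ≃g H) {s : Finset V} :
    s.map e.toEquiv.toEmbedding ∈ indepC H ↔ s ∈ indepC G := by
  simp only [mem_indepC_iff, Finset.forall_mem_map]
  simp [e.map_adj_iff]

lemma indNum_le_of_iso (e : G ≃g H) : indNum G ≤ indNum H :=
  Finset.sup_le fun s hs => by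
    simpa using card_le_indNum ((map_mem_indepC_iff e).2 hs)

lemma indNum_eq_of_iso (e : G ≃g H) : indNum G = indNum H :=
  le_antisymm (indNum_le_of_iso e) (indNum_le_of_iso e.symm)

lemma WellCovered.of_iso (e : G ≃g H) (hH : WellCovered H) : WellCovered G := by
  intro s hs hs_max
  have hs_max' : ∀ u ∈ indepC H, s.map e.toEquiv.toEmbedding ⊆ u →
      s.map e.toEquiv.toEmbedding = u := by
    intro u hu hsu
    have hu' : u.map e.symm.toEquiv.toEmbedding ∈ indepC G := (map_mem_indepC_iff e.symm).2 hu
    have hsu' := hs_max _ hu' (Finset.subset_map_symm.2 hsu)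
    exact Finset.Subset.antisymm hsu (Finset.map_symm_subset.1 hsu'.ge)
  simpa [indNum_eq_of_iso e] using hH _ ((map_mem_indepC_iff e).2 hs) hs_max'

end Independence

section Localization

variable {V : Type*} [Fintype V] {G : SimpleGraph V} {S : Finset V}

lemma subtype_mem_indepC_induce {A : Set V} [DecidablePred (· ∈ A)] [Fintype A] {s : Finset V}
    (hs : s ∈ indepC G) :
    s.subtype (· ∈ A) ∈ indepC (G.induce A) :=
  mem_indepC_iff.2 fun a ha b hb =>
    mem_indepC_iff.1 hs a (Finset.mem_subtype.1 ha) b (Finset.mem_subtype.1 hb)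

lemma map_subtype_union_mem_indepC (hS : S ∈ indepC G) {t : Finset (locSet G S)}
    (ht : t ∈ indepC (locG G S)) : t.map (Function.Embedding.subtype _) ∪ S ∈ indepC G := by
  rw [mem_indepC_iff] at hS ht ⊢
  simp only [Finset.mem_union, Finset.mem_map, Function.Embedding.coe_subtype]
  rintro _ (⟨a, ha, rfl⟩ | ha) _ (⟨b, hb, rfl⟩ | hb)
  · exact ht a ha b hb
  · exact a.2.2 _ hb
  · exact fun hab => b.2.2 _ ha hab.symm
  · exact hS _ ha _ hb

lemma map_subtype_union_maximal {t : Finset (locSet G S)}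
    (ht_max : ∀ u ∈ indepC (locG G S), t ⊆ u → t = u) :
    ∀ u ∈ indepC G, t.map (Function.Embedding.subtype _) ∪ S ⊆ u →
      t.map (Function.Embedding.subtype _) ∪ S = u := by
  intro u hu htu
  refine Finset.Subset.antisymm htu fun w hw => ?_
  by_cases hwS : w ∈ S
  · exact Finset.mem_union_right _ hwS
  have hw_loc : w ∈ locSet G S :=
    ⟨hwS, fun x hx => mem_indepC_iff.1 hu w hw x (htu (Finset.mem_union_right _ hx))⟩
  have ht_sub : t ⊆ u.subtype (· ∈ locSet G S) := fun a ha =>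
    Finset.mem_subtype.2 (htu (Finset.mem_union_left _ (Finset.mem_map_of_mem _ ha)))
  have hw_t : (⟨w, hw_loc⟩ : locSet G S) ∈ t :=
    (ht_max _ (subtype_mem_indepC_induce hu) ht_sub).symm ▸ Finset.mem_subtype.2 hw
  exact Finset.mem_union_left _ (Finset.mem_map_of_mem _ hw_t)

lemma card_add_card_eq_indNum_of_maximal (hG : WellCovered G) (hS : S ∈ indepC G)
    {t : Finset (locSet G S)} (ht : t ∈ indepC (locG G S))
    (ht_max : ∀ u ∈ indepC (locG G S), t ⊆ u → t = u) :
    t.card + S.card = indNum G := by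
  have hdisj : Disjoint (t.map (Function.Embedding.subtype _)) S :=
    Finset.disjoint_left.2 fun _ hw hwS => (t.property_of_mem_map_subtype hw).1 hwS
  simpa [Finset.card_union_of_disjoint hdisj] using
    hG _ (map_subtype_union_mem_indepC hS ht) (map_subtype_union_maximal ht_max)

lemma wellCovered_locG (hG : WellCovered G) (hS : S ∈ indepC G) :
    WellCovered (locG G S) ∧ indNum (locG G S) + S.card = indNum G := by
  have hS_le := card_le_indNum hS
  obtain ⟨hwc, hnum⟩ := wellCovered_of_forall_maximal_card (G := locG G S)
    (k := indNum G - S.card) fun t ht ht_max => by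
      have := card_add_card_eq_indNum_of_maximal hG hS ht ht_max
      omega
  exact ⟨hwc, by omega⟩

end Localization

lemma mem_subtype_ne_iff {V : Type*} {S : Finset V} {v : V} {w : {u : V // u ≠ v}} :
    w ∈ S.subtype (· ≠ v) ↔ (w : V) ∈ S :=
  Finset.mem_subtype

/-- Both sides are the subgraph of `G` induced on `V ∖ (S ∪ N(S) ∪ {v})`. -/
def gdelLocGIso {V : Type*} (G : SimpleGraph V) (S : Finset V) (v : locSet G S) :
    Gdel (locG G S) v ≃g locG (Gdel G v) (S.subtype (· ≠ (v : V))) where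
  toFun a := ⟨⟨a.1.1, fun h => a.2 (Subtype.ext h)⟩,
    fun h => a.1.2.1 (mem_subtype_ne_iff.1 h), fun u hu => a.1.2.2 u (mem_subtype_ne_iff.1 hu)⟩
  invFun b := ⟨⟨b.1.1, fun h => b.2.1 (mem_subtype_ne_iff.2 h),
      fun u hu => b.2.2 ⟨u, fun h => v.2.1 (h ▸ hu)⟩ (mem_subtype_ne_iff.2 hu)⟩,
    fun h => b.1.2 (congrArg Subtype.val h)⟩
  left_inv _ := rfl
  right_inv _ := rfl
  map_rel_iff' := Iff.rfl

theorem stmt_3_general {V : Type*} [Fintype V] (G : SimpleGraph V) (hG : InW2 G)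
    (S : Finset V) (hS : S ∈ indepC G) :
    InW2 (locG G S) := by
  obtain ⟨hwc, hdel⟩ := hG
  obtain ⟨hwc_loc, hnum_loc⟩ := wellCovered_locG hwc hS
  refine ⟨hwc_loc, fun v => ?_⟩
  obtain ⟨hwc_del, hnum_del⟩ := hdel v
  have hS' : S.subtype (· ≠ (v : V)) ∈ indepC (Gdel G v) :=
    subtype_mem_indepC_induce (A := {u | u ≠ (v : V)}) hS
  have hS'_card : (S.subtype (· ≠ (v : V))).card = S.card := by
    rw [Finset.card_subtype, Finset.filter_true_of_mem]
    rintro x hx rfl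
    exact v.2.1 hx
  obtain ⟨hwc_del_loc, hnum_del_loc⟩ := wellCovered_locG hwc_del hS'
  have hnum : indNum (locG (Gdel G v) (S.subtype (· ≠ (v : V)))) = indNum (locG G S) := by
    omega
  -- `convert` reconciles the `Fintype` instance of `G_S ∖ v` with the one synthesized here.
  exact ⟨by convert hwc_del_loc.of_iso (gdelLocGIso G S v),
    by convert (indNum_eq_of_iso (gdelLocGIso G S v)).trans hnum⟩

theorem stmt_3 {V : Type*} [Fintype V] (G : SimpleGraph V) (hG : InW2 G)
    (S : Finset V) (hS : S ∈ indepC G) (hlt : S.card < indNum G) :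
    InW2 (locG G S) :=
  stmt_3_general G hG S hS
end

section
/- Every planar graph is pseudo-planar: for every independent set S of a planar graph G, the localization G_S satisfies δ*(G_S) ≤ 5 and G_S is not isomorphic to the join 2K₂ * 2K₂. -/
open Finset
open Classical

/-!
`G_S` is an induced subgraph of `G`, so it has neither a `K₅` nor a `K₃,₃` minor. The join
`2K₂ * 2K₂` contains `K₃,₃` as a subgraph, which rules it out. Since `δ*(v) ≤ deg v`, it remains
to find a vertex of degree at most `5` in a `K₅`-minor-free graph, and this follows from Mader's
theorem: a graph on `n ≥ 3` vertices with at least `3n - 5` edges has a `K₅` minor. In a minimal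
counterexample to Mader's theorem, surplus edges can be deleted, vertices of degree at most `3`
can be deleted, and an edge lying in at most two triangles can be contracted. What remains is a
vertex of degree `4` or `5` whose neighbourhood has minimum degree `3`, and a short case analysis
finds a `K₄` minor in that neighbourhood, hence a `K₅` minor together with the vertex.
-/

section Minors

open SimpleGraph

variable {α β γ : Type*}

lemma IsMinor.map {K : SimpleGraph γ} {G : SimpleGraph α} {G' : SimpleGraph β}
    (h : IsMinor K G) (f : G ↪g G') : IsMinor K G' := by
  obtain ⟨B, hne, hconn, hdisj, hadj⟩ := h
  refine ⟨fun u => f '' B u, fun u => (hne u).image f, fun u => ?_,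
    fun u w huw => Set.disjoint_image_of_injective f.injective (hdisj u w huw), fun u w huw => ?_⟩
  · let φ : G.induce (B u) →g G'.induce (f '' B u) :=
      { toFun := fun x => ⟨f x, x, x.2, rfl⟩, map_rel' := fun hxy => f.map_rel_iff.mpr hxy }
    exact (hconn u).map φ fun ⟨_, x, hx, hfx⟩ => ⟨⟨x, hx⟩, Subtype.ext hfx⟩
  · obtain ⟨x, hx, y, hy, hxy⟩ := hadj u w huw
    exact ⟨f x, ⟨x, hx, rfl⟩, f y, ⟨y, hy, rfl⟩, f.map_rel_iff.mpr hxy⟩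

lemma isMinor_of_injective {K : SimpleGraph β} {G : SimpleGraph α} (f : K →g G)
    (hf : Function.Injective f) : IsMinor K G := by
  refine ⟨fun u => {f u}, fun u => Set.singleton_nonempty _, fun u => ?_,
    fun u w huw => Set.disjoint_singleton.mpr (hf.ne huw),
    fun u w huw => ⟨f u, rfl, f w, rfl, f.map_rel huw⟩⟩
  exact (induce_singleton_eq_top G (f u)) ▸ connected_top

end Minors

namespace SimpleGraph

noncomputable section

variable {V : Type*} {G G' : SimpleGraph V} {n : ℕ} {u v w x y : V}

section CompleteMinors

variable {s t : Set V}

lemma connected_induce_of_reachable {H : SimpleGraph V} {U W : Set V} (hUW : U ⊆ W)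
    (hU : (H.induce U).Connected)
    (hstep : ∀ a b (ha : a ∈ U) (hb : b ∈ U), H.Adj a b →
      (G.induce W).Reachable ⟨a, hUW ha⟩ ⟨b, hUW hb⟩)
    (hW : ∀ w (hw : w ∈ W), ∃ u, ∃ hu : u ∈ U, (G.induce W).Reachable ⟨u, hUW hu⟩ ⟨w, hw⟩) :
    (G.induce W).Connected := by
  let ι : U → W := fun u => ⟨u, hUW u.2⟩
  have hι : ∀ u u' : U, (G.induce W).Reachable (ι u) (ι u') := by
    intro u u'
    rw [reachable_iff_reflTransGen]
    refine Relation.ReflTransGen.lift' ι (fun a b hab => ?_) _ _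
      ((reachable_iff_reflTransGen _ _).mp (hU.preconnected u u'))
    exact (reachable_iff_reflTransGen _ _).mp (hstep a b a.2 b.2 hab)
  obtain ⟨u₀⟩ := hU.nonempty
  rw [connected_iff_exists_forall_reachable]
  refine ⟨ι u₀, fun ⟨w, hw⟩ => ?_⟩
  obtain ⟨u, hu, hreach⟩ := hW w hw
  exact (hι u₀ ⟨u, hu⟩).trans hreach

def HasCompleteMinorIn (G : SimpleGraph V) (n : ℕ) (s : Set V) : Prop :=
  ∃ B : Fin n → Set V, (∀ i, B i ⊆ s) ∧ (∀ i, (G.induce (B i)).Connected) ∧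
    (∀ i j, i ≠ j → Disjoint (B i) (B j)) ∧ ∀ i j, i ≠ j → ∃ a ∈ B i, ∃ b ∈ B j, G.Adj a b

namespace HasCompleteMinorIn

lemma isMinor (h : G.HasCompleteMinorIn n s) : IsMinor (⊤ : SimpleGraph (Fin n)) G := by
  obtain ⟨B, -, hconn, hdisj, hadj⟩ := h
  exact ⟨B, fun i => Set.nonempty_coe_sort.mp (hconn i).nonempty, hconn, hdisj, hadj⟩

lemma mono_set (h : G.HasCompleteMinorIn n s) (hst : s ⊆ t) : G.HasCompleteMinorIn n t := by
  obtain ⟨B, hsub, hrest⟩ := h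
  exact ⟨B, fun i => (hsub i).trans hst, hrest⟩

lemma mono (h : G.HasCompleteMinorIn n s) (hle : G ≤ G') : G'.HasCompleteMinorIn n s := by
  obtain ⟨B, hsub, hconn, hdisj, hadj⟩ := h
  refine ⟨B, hsub, fun i => (hconn i).mono fun a b hab => hle hab, hdisj, fun i j hij => ?_⟩
  obtain ⟨a, ha, b, hb, hab⟩ := hadj i j hij
  exact ⟨a, ha, b, hb, hle hab⟩

lemma cone (h : G.HasCompleteMinorIn n t) (hv : v ∉ t) (hadj : ∀ u ∈ t, G.Adj v u) :
    G.HasCompleteMinorIn (n + 1) (insert v t) := by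
  obtain ⟨B, hsub, hconn, hdisj, hBadj⟩ := h
  have hvB : ∀ i, v ∉ B i := fun i hvB => hv (hsub i hvB)
  have hv_adj : ∀ i, ∃ b ∈ B i, G.Adj v b := fun i =>
    let ⟨⟨b, hb⟩⟩ := (hconn i).nonempty
    ⟨b, hb, hadj b (hsub i hb)⟩
  refine ⟨Fin.cons {v} B, fun i => ?_, fun i => ?_, fun i j hij => ?_, fun i j hij => ?_⟩
  · cases i using Fin.cases with
    | zero => simp
    | succ i => simpa using (hsub i).trans (Set.subset_insert v t)
  · cases i using Fin.cases with
    | zero => rw [Fin.cons_zero]; exact (induce_singleton_eq_top G v) ▸ connected_top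
    | succ i => rw [Fin.cons_succ]; exact hconn i
  · cases i using Fin.cases <;> cases j using Fin.cases
    · exact absurd rfl hij
    · simpa using hvB _
    · simpa using hvB _
    · simpa using hdisj _ _ (fun h => hij (congrArg Fin.succ h))
  · cases i using Fin.cases <;> cases j using Fin.cases
    · exact absurd rfl hij
    · simpa using hv_adj _
    · obtain ⟨b, hb, hvb⟩ := hv_adj _
      exact ⟨b, by simpa using hb, v, by simp, hvb.symm⟩
    · simpa using hBadj _ _ (fun h => hij (congrArg Fin.succ h))

end HasCompleteMinorIn

lemma hasCompleteMinorIn_of_isClique {u : Finset V} (hu : G.IsClique (u : Set V)) :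
    G.HasCompleteMinorIn #u u := by
  induction u using Finset.induction_on with
  | empty =>
    rw [Finset.card_empty]
    exact ⟨Fin.elim0, fun i => i.elim0, fun i => i.elim0, fun i => i.elim0, fun i => i.elim0⟩
  | insert v u hv ih =>
    rw [Finset.coe_insert, isClique_insert] at hu
    rw [Finset.card_insert_of_notMem hv, Finset.coe_insert]
    exact (ih hu.1).cone (by simpa using hv) fun w hw => hu.2 w hw (by rintro rfl; exact hv hw)

lemma hasCompleteMinorIn_of_isNClique {u : Finset V} (hu : G.IsNClique n u) :
    G.HasCompleteMinorIn n u :=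
  hu.card_eq ▸ hasCompleteMinorIn_of_isClique hu.isClique

/-- The contraction of the edge `xy` onto `x`; `y` keeps its edges, so this is only meaningful on
vertex sets avoiding `y`. -/
def contractEdge (G : SimpleGraph V) (x y : V) : SimpleGraph V :=
  G ⊔ fromRel fun a b => a = x ∧ G.Adj y b

lemma contractEdge_adj {a b : V} :
    (G.contractEdge x y).Adj a b ↔
      G.Adj a b ∨ a ≠ b ∧ (a = x ∧ G.Adj y b ∨ b = x ∧ G.Adj y a) := by
  simp [contractEdge]

lemma HasCompleteMinorIn.of_contractEdge (h : (G.contractEdge x y).HasCompleteMinorIn n t)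
    (hxy : G.Adj x y) (hy : y ∉ t) : G.HasCompleteMinorIn n (insert y t) := by
  obtain ⟨B, hsub, hconn, hdisj, hadj⟩ := h
  have hyB : ∀ i, y ∉ B i := fun i hyB => hy (hsub i hyB)
  -- the branch set containing `x` absorbs `y`
  set B' : Fin n → Set V := fun i => B i ∪ {w | w = y ∧ x ∈ B i}
  have hBB' : ∀ i, B i ⊆ B' i := fun i => Set.subset_union_left
  have hyB' : ∀ i, x ∈ B i → y ∈ B' i := fun i hx => Or.inr ⟨rfl, hx⟩
  refine ⟨B', fun i => ?_, fun i => ?_, fun i j hij => ?_, fun i j hij => ?_⟩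
  · rintro w (hw | ⟨rfl, -⟩)
    exacts [Set.mem_insert_of_mem _ (hsub i hw), Set.mem_insert _ _]
  · have hreach : ∀ a b (ha : a ∈ B' i) (hb : b ∈ B' i), G.Adj a b →
        (G.induce (B' i)).Reachable ⟨a, ha⟩ ⟨b, hb⟩ := fun _ _ _ _ h => Adj.reachable h
    refine connected_induce_of_reachable (hBB' i) (hconn i) (fun a b ha hb hab => ?_) ?_
    · rcases contractEdge_adj.mp hab with hab | ⟨-, ⟨rfl, hyb⟩ | ⟨rfl, hya⟩⟩
      · exact hreach _ _ _ _ hab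
      · exact (hreach _ _ _ (hyB' i ha) hxy).trans (hreach _ _ _ _ hyb)
      · exact (hreach _ _ _ (hyB' i hb) hya.symm).trans (hreach _ _ _ _ hxy.symm)
    · rintro w (hw | ⟨rfl, hx⟩)
      · exact ⟨w, hw, Reachable.rfl⟩
      · exact ⟨x, hx, hreach _ _ _ _ hxy⟩
  · rw [Set.disjoint_left]
    rintro w (hwi | ⟨hwy, hxi⟩) (hwj | ⟨hwy', hxj⟩)
    exacts [Set.disjoint_left.mp (hdisj i j hij) hwi hwj, hyB i (hwy' ▸ hwi),
      hyB j (hwy ▸ hwj), Set.disjoint_left.mp (hdisj i j hij) hxi hxj]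
  · obtain ⟨a, ha, b, hb, hab⟩ := hadj i j hij
    rcases contractEdge_adj.mp hab with hab | ⟨-, ⟨rfl, hyb⟩ | ⟨rfl, hya⟩⟩
    exacts [⟨a, hBB' i ha, b, hBB' j hb, hab⟩, ⟨y, hyB' i ha, b, hBB' j hb, hyb⟩,
      ⟨a, hBB' i ha, y, hyB' j hb, hya.symm⟩]

end CompleteMinors

section DegreesIn

variable {s t : Finset V} {a : V}

def neighborsIn (G : SimpleGraph V) (s : Finset V) (v : V) : Finset V := {u ∈ s | G.Adj v u}

@[simp]
lemma mem_neighborsIn : u ∈ G.neighborsIn s v ↔ u ∈ s ∧ G.Adj v u :=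
  Finset.mem_filter

def degreeIn (G : SimpleGraph V) (s : Finset V) (v : V) : ℕ := #(G.neighborsIn s v)

/-- Twice the number of edges of `G` inside `s`. -/
def degreeSumIn (G : SimpleGraph V) (s : Finset V) : ℕ := ∑ v ∈ s, G.degreeIn s v

lemma degreeIn_lt_card (hv : v ∈ s) : G.degreeIn s v < #s :=
  Finset.card_lt_card <| Finset.filter_ssubset.mpr ⟨v, hv, G.irrefl⟩

lemma degreeIn_insert (ha : a ∉ s) (v : V) :
    G.degreeIn (insert a s) v = G.degreeIn s v + if G.Adj v a then 1 else 0 := by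
  unfold degreeIn neighborsIn
  rw [Finset.filter_insert]
  split_ifs with h
  · exact Finset.card_insert_of_notMem fun h' => ha (Finset.mem_filter.mp h').1
  · rfl

lemma degreeSumIn_insert (ha : a ∉ s) :
    G.degreeSumIn (insert a s) = G.degreeSumIn s + 2 * G.degreeIn s a := by
  have hcomm : ∑ v ∈ s, (if G.Adj v a then 1 else 0) = G.degreeIn s a := by
    rw [Finset.sum_boole, Nat.cast_id, degreeIn, neighborsIn]
    simp_rw [G.adj_comm]
  unfold degreeSumIn
  simp only [Finset.sum_insert ha, degreeIn_insert ha, G.irrefl, if_false,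
    Finset.sum_add_distrib, hcomm]
  ring

lemma degreeSumIn_erase (hv : v ∈ s) :
    G.degreeSumIn s = G.degreeSumIn (s.erase v) + 2 * G.degreeIn (s.erase v) v := by
  rw [← degreeSumIn_insert (Finset.notMem_erase v s), Finset.insert_erase hv]

lemma even_degreeSumIn (s : Finset V) : Even (G.degreeSumIn s) := by
  induction s using Finset.induction_on with
  | empty => simp [degreeSumIn]
  | insert a s ha ih => exact degreeSumIn_insert ha ▸ ih.add (even_two_mul _)

lemma degreeSumIn_congr (h : ∀ a ∈ s, ∀ b ∈ s, G.Adj a b ↔ G'.Adj a b) :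
    G.degreeSumIn s = G'.degreeSumIn s :=
  Finset.sum_congr rfl fun a ha => congrArg Finset.card <|
    Finset.filter_congr fun b hb => h a ha b hb

lemma degreeSumIn_deleteEdges (hx : x ∈ s) (hy : y ∈ s) (hxy : G.Adj x y) :
    (G.deleteEdges {s(x, y)}).degreeSumIn s + 2 = G.degreeSumIn s := by
  have hy' : y ∈ s.erase x := Finset.mem_erase.mpr ⟨hxy.ne', hy⟩
  have hrest : (G.deleteEdges {s(x, y)}).degreeSumIn (s.erase x) = G.degreeSumIn (s.erase x) :=
    degreeSumIn_congr fun a ha b hb => by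
      simp [Finset.ne_of_mem_erase ha, Finset.ne_of_mem_erase hb]
  have hx_nbrs : (G.deleteEdges {s(x, y)}).neighborsIn (s.erase x) x =
      (G.neighborsIn (s.erase x) x).erase y := by
    ext u
    simp only [mem_neighborsIn, Finset.mem_erase, deleteEdges_adj, Set.mem_singleton_iff,
      Sym2.eq_iff]
    tauto
  have hx_deg : (G.deleteEdges {s(x, y)}).degreeIn (s.erase x) x + 1 =
      G.degreeIn (s.erase x) x := by
    rw [degreeIn, degreeIn, hx_nbrs, Finset.card_erase_add_one (mem_neighborsIn.mpr ⟨hy', hxy⟩)]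
  rw [degreeSumIn_erase hx, degreeSumIn_erase (G := G) hx, hrest, ← hx_deg]
  ring

lemma degreeSumIn_contractEdge (hx : x ∈ s) (hy : y ∈ s) (hxy : G.Adj x y) :
    (G.contractEdge x y).degreeSumIn (s.erase y) + 2 * #(G.neighborsIn s x ∩ G.neighborsIn s y)
      + 2 = G.degreeSumIn s := by
  set t := (s.erase y).erase x with ht
  have hx' : x ∈ s.erase y := Finset.mem_erase.mpr ⟨hxy.ne, hx⟩
  have hmem : ∀ u ∈ t, u ≠ x ∧ u ≠ y := fun u hu =>
    ⟨Finset.ne_of_mem_erase hu, Finset.ne_of_mem_erase (Finset.mem_of_mem_erase hu)⟩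
  have hrest : (G.contractEdge x y).degreeSumIn t = G.degreeSumIn t :=
    degreeSumIn_congr fun a ha b hb => by simp [contractEdge_adj, (hmem a ha).1, (hmem b hb).1]
  have hx_nbrs : (G.contractEdge x y).neighborsIn t x = G.neighborsIn t x ∪ G.neighborsIn t y := by
    ext u
    simp only [mem_neighborsIn, Finset.mem_union, contractEdge_adj]
    constructor
    · rintro ⟨hu, hxu | ⟨-, ⟨-, hyu⟩ | ⟨rfl, -⟩⟩⟩
      exacts [Or.inl ⟨hu, hxu⟩, Or.inr ⟨hu, hyu⟩, absurd rfl (hmem u hu).1]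
    · rintro (⟨hu, hxu⟩ | ⟨hu, hyu⟩)
      exacts [⟨hu, Or.inl hxu⟩, ⟨hu, Or.inr ⟨(hmem u hu).1.symm, Or.inl ⟨trivial, hyu⟩⟩⟩]
  have hcommon : G.neighborsIn s x ∩ G.neighborsIn s y = G.neighborsIn t x ∩ G.neighborsIn t y := by
    ext u
    simp only [t, Finset.mem_inter, mem_neighborsIn, Finset.mem_erase]
    constructor
    · rintro ⟨⟨hu, hxu⟩, -, hyu⟩
      exact ⟨⟨⟨hxu.ne', hyu.ne', hu⟩, hxu⟩, ⟨hxu.ne', hyu.ne', hu⟩, hyu⟩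
    · rintro ⟨⟨⟨-, -, hu⟩, hxu⟩, -, hyu⟩
      exact ⟨⟨hu, hxu⟩, hu, hyu⟩
  have hunion := Finset.card_union_add_card_inter (G.neighborsIn t x) (G.neighborsIn t y)
  have hy_deg : G.degreeIn (s.erase y) y = G.degreeIn t y + 1 := by
    rw [← Finset.insert_erase hx', degreeIn_insert (Finset.notMem_erase x _), if_pos hxy.symm]
  rw [degreeSumIn_erase hx', degreeSumIn_erase hy, degreeSumIn_erase (G := G) hx', ← ht, hrest,
    hy_deg, hcommon, degreeIn, hx_nbrs]
  unfold degreeIn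
  omega

lemma adj_of_card_le_degreeIn_add_one (hu : u ∈ t) (hw : w ∈ t) (huw : u ≠ w)
    (h : #t ≤ G.degreeIn t u + 1) : G.Adj u w := by
  by_contra huw'
  have hsub : G.neighborsIn t u ⊆ (t.erase u).erase w := fun z hz => by
    obtain ⟨hz, huz⟩ := mem_neighborsIn.mp hz
    exact Finset.mem_erase.mpr ⟨fun h => huw' (h ▸ huz), Finset.mem_erase.mpr ⟨huz.ne', hz⟩⟩
  have hcard := Finset.card_le_card hsub
  rw [Finset.card_erase_of_mem (Finset.mem_erase.mpr ⟨huw.symm, hw⟩),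
    Finset.card_erase_of_mem hu] at hcard
  have := Finset.one_lt_card.mpr ⟨u, hu, w, hw, huw⟩
  unfold degreeIn at h
  omega

end DegreesIn

section SmallMinors

variable {t : Finset V}

lemma hasCompleteMinorIn_three_of_card_eq_four (ht : #t = 4)
    (hdeg : ∀ u ∈ t, 2 ≤ G.degreeIn t u) : G.HasCompleteMinorIn 3 t := by
  obtain ⟨a, ha⟩ := Finset.card_pos.mp (by omega : 0 < #t)
  obtain ⟨b, hb, c, hc, hbc⟩ := Finset.one_lt_card.mp (hdeg a ha)
  rw [mem_neighborsIn] at hb hc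
  by_cases hbc' : G.Adj b c
  · exact (hasCompleteMinorIn_of_isNClique (is3Clique_triple_iff.mpr ⟨hb.2, hc.2, hbc'⟩)).mono_set
      (by simp [Set.insert_subset_iff, ha, hb.1, hc.1])
  -- otherwise `a b d c` is a 4-cycle, and contracting `b d` leaves the triangle `a b c`
  obtain ⟨d, hd⟩ : ((G.neighborsIn t b).erase a).Nonempty := by
    rw [← Finset.card_pos, Finset.card_erase_of_mem (mem_neighborsIn.mpr ⟨ha, hb.2.symm⟩)]
    have := hdeg b hb.1
    unfold degreeIn at this
    omega
  simp only [Finset.mem_erase, mem_neighborsIn] at hd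
  obtain ⟨hda, hdt, hbd⟩ := hd
  have hdc : d ≠ c := by rintro rfl; exact hbc' hbd
  have ht_eq : t = {a, b, c, d} := by
    refine (Finset.eq_of_subset_of_card_le (by simp [Finset.insert_subset_iff, ha, hb.1, hc.1, hdt])
      ?_).symm
    rw [ht, Finset.card_insert_of_notMem (by simp [hb.2.ne, hc.2.ne, hda.symm]),
      Finset.card_insert_of_notMem (by simp [hbc, hbd.ne]), Finset.card_pair hdc.symm]
  have hcd : G.Adj c d := by
    by_contra hcd
    have hsub : G.neighborsIn t c ⊆ {a} := by
      intro u hu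
      simp only [ht_eq, mem_neighborsIn, Finset.mem_insert, Finset.mem_singleton] at hu
      obtain ⟨rfl | rfl | rfl | rfl, hcu⟩ := hu
      exacts [Finset.mem_singleton_self _, absurd hcu.symm hbc', absurd hcu G.irrefl,
        absurd hcu hcd]
    have := (hdeg c hc.1).trans (Finset.card_le_card hsub)
    simp at this
  have htri : (G.contractEdge b d).IsNClique 3 {a, b, c} :=
    is3Clique_triple_iff.mpr ⟨contractEdge_adj.mpr (Or.inl hb.2),
      contractEdge_adj.mpr (Or.inl hc.2),
      contractEdge_adj.mpr (Or.inr ⟨hbc, Or.inl ⟨rfl, hcd.symm⟩⟩)⟩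
  refine ((hasCompleteMinorIn_of_isNClique htri).of_contractEdge hbd ?_).mono_set ?_
  · simp [hda, hbd.ne', hdc]
  · simp [ht_eq, Set.insert_subset_iff]

lemma hasCompleteMinorIn_four_of_three_le_degreeIn (ht : #t = 4 ∨ #t = 5)
    (hdeg : ∀ u ∈ t, 3 ≤ G.degreeIn t u) : G.HasCompleteMinorIn 4 t := by
  rcases ht with ht | ht
  · refine ht ▸ hasCompleteMinorIn_of_isClique fun a ha b hb hab => ?_
    exact adj_of_card_le_degreeIn_add_one ha hb hab (by have := hdeg a ha; omega)
  -- the degrees in `t` cannot all be `3`, since their sum is even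
  obtain ⟨p, hp, hp4⟩ : ∃ p ∈ t, 4 ≤ G.degreeIn t p := by
    by_contra! h
    have h3 : ∀ u ∈ t, G.degreeIn t u = 3 := fun u hu => by
      have := h u hu; have := hdeg u hu; omega
    have h15 : G.degreeSumIn t = 15 := by
      rw [degreeSumIn, Finset.sum_congr rfl h3, Finset.sum_const, ht, smul_eq_mul]
    exact absurd (h15 ▸ even_degreeSumIn (G := G) t) (by decide)
  have hdeg' : ∀ u ∈ t.erase p, 2 ≤ G.degreeIn (t.erase p) u := fun u hu => by
    have := degreeIn_insert (G := G) (Finset.notMem_erase p t) u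
    rw [Finset.insert_erase hp] at this
    have := hdeg u (Finset.mem_of_mem_erase hu)
    split_ifs at * <;> omega
  have hK4 := (hasCompleteMinorIn_three_of_card_eq_four (by rw [Finset.card_erase_of_mem hp, ht])
    hdeg').cone (by simp) fun u hu => adj_of_card_le_degreeIn_add_one hp
      (Finset.mem_of_mem_erase hu) (Finset.ne_of_mem_erase hu).symm (by omega)
  rwa [← Finset.coe_insert, Finset.insert_erase hp] at hK4

lemma hasCompleteMinorIn_five_of_neighborsIn {s : Finset V} (hv : v ∈ s)
    (hdeg : G.degreeIn s v = 4 ∨ G.degreeIn s v = 5)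
    (hcommon : ∀ u ∈ G.neighborsIn s v, 2 < #(G.neighborsIn s v ∩ G.neighborsIn s u)) :
    G.HasCompleteMinorIn 5 s := by
  have hdeg' : ∀ u ∈ G.neighborsIn s v, 3 ≤ G.degreeIn (G.neighborsIn s v) u := fun u hu => by
    have hnbrs : G.neighborsIn (G.neighborsIn s v) u = G.neighborsIn s v ∩ G.neighborsIn s u := by
      ext w
      simp only [mem_neighborsIn, Finset.mem_inter]
      tauto
    rw [degreeIn, hnbrs]
    exact hcommon u hu
  have hK4 := hasCompleteMinorIn_four_of_three_le_degreeIn hdeg hdeg'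
  exact (hK4.cone (by simp) fun u hu => (mem_neighborsIn.mp hu).2).mono_set
    (Set.insert_subset hv fun u hu => (mem_neighborsIn.mp hu).1)

end SmallMinors

/-- Mader: at least `3 |s| - 5` edges of `G` inside `s` force a `K₅` minor inside `s`. -/
theorem hasCompleteMinorIn_five_of_le_degreeSumIn (G : SimpleGraph V) (s : Finset V)
    (h3 : 3 ≤ #s) (hE : 6 * #s ≤ G.degreeSumIn s + 10) : G.HasCompleteMinorIn 5 s := by
  by_cases hsurplus : 6 * #s ≤ G.degreeSumIn s + 8
  · obtain ⟨x, hx, hxdeg⟩ : ∃ x ∈ s, 0 < G.degreeIn s x := by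
      by_contra! h
      have : G.degreeSumIn s = 0 := Finset.sum_eq_zero fun x hx => Nat.le_zero.mp (h x hx)
      omega
    obtain ⟨y, hy⟩ := Finset.card_pos.mp hxdeg
    rw [mem_neighborsIn] at hy
    have hdel := degreeSumIn_deleteEdges hx hy.1 hy.2
    exact (hasCompleteMinorIn_five_of_le_degreeSumIn (G.deleteEdges {s(x, y)}) s h3
      (by omega)).mono (deleteEdges_le _)
  by_cases hlow : ∃ v ∈ s, G.degreeIn s v ≤ 3
  · obtain ⟨v, hv, hv3⟩ := hlow
    have h4 : 4 ≤ #s := by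
      by_contra! h
      have : G.degreeSumIn s ≤ #s • 2 := Finset.sum_le_card_nsmul s _ 2 fun u hu => by
        have := degreeIn_lt_card (G := G) hu; omega
      rw [smul_eq_mul] at this
      omega
    have hE' := degreeSumIn_erase (G := G) hv
    have hdeg : G.degreeIn (s.erase v) v ≤ G.degreeIn s v :=
      Finset.card_le_card (Finset.filter_subset_filter _ (Finset.erase_subset _ _))
    have hcard := Finset.card_erase_of_mem hv
    exact (hasCompleteMinorIn_five_of_le_degreeSumIn G (s.erase v) (by omega) (by omega)).mono_set
      (by simp)
  push Not at hlow
  by_cases hsparse : ∃ x ∈ s, ∃ y ∈ s, G.Adj x y ∧ #(G.neighborsIn s x ∩ G.neighborsIn s y) ≤ 2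
  · obtain ⟨x, hx, y, hy, hxy, hc⟩ := hsparse
    have hcon := degreeSumIn_contractEdge hx hy hxy
    have h5 : 5 ≤ #s := by have := hlow x hx; have := degreeIn_lt_card (G := G) hx; omega
    have hcard := Finset.card_erase_of_mem hy
    have hK5 := (hasCompleteMinorIn_five_of_le_degreeSumIn (G.contractEdge x y) (s.erase y)
      (by omega) (by omega)).of_contractEdge hxy (by simp)
    rwa [Finset.coe_erase, Set.insert_sdiff_singleton, Set.insert_eq_of_mem hy] at hK5
  push Not at hsparse
  obtain ⟨v, hv, hv5⟩ : ∃ v ∈ s, G.degreeIn s v ≤ 5 := by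
    by_contra! h
    have : #s • 6 ≤ G.degreeSumIn s := Finset.card_nsmul_le_sum s _ 6 fun v hv => h v hv
    rw [smul_eq_mul] at this
    omega
  exact hasCompleteMinorIn_five_of_neighborsIn hv (by have := hlow v hv; omega)
    fun u hu => hsparse v hv u (mem_neighborsIn.mp hu).1 (mem_neighborsIn.mp hu).2
termination_by #s + G.degreeSumIn s

section Fintype

variable {W : Type*} [Fintype W] (H : SimpleGraph W) [DecidableRel H.Adj]

lemma degreeIn_univ (v : W) : H.degreeIn Finset.univ v = H.degree v := by
  rw [← card_neighborFinset_eq_degree, neighborFinset_eq_filter, degreeIn, neighborsIn]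
  congr

theorem exists_degree_le_five_of_not_isMinor [Nonempty W] (hH : ¬IsMinor K5 H) :
    ∃ v, H.degree v ≤ 5 := by
  by_contra! h
  have hcard : 5 < Fintype.card W := (h (Classical.arbitrary W)).trans (H.degree_lt_card_verts _)
  have hsum : Finset.univ.card • 6 ≤ H.degreeSumIn Finset.univ :=
    Finset.card_nsmul_le_sum _ _ 6 fun v _ => (degreeIn_univ H v).symm ▸ h v
  rw [smul_eq_mul, Finset.card_univ] at hsum
  exact hH (hasCompleteMinorIn_five_of_le_degreeSumIn H Finset.univ
    (by rw [Finset.card_univ]; omega) (by rw [Finset.card_univ]; omega)).isMinor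

lemma deltaStarV_le_degree (v : W) : deltaStarV H v ≤ H.degree v := by
  rw [← card_neighborFinset_eq_degree, neighborFinset_eq_filter]
  exact Finset.card_le_card fun u hu => by simp_all

end Fintype

lemma isMinor_K33_joinG_twoK2 : IsMinor K33 (joinG twoK2 twoK2) := by
  let f : K33 →g joinG twoK2 twoK2 :=
    { toFun := Sum.map (Fin.castLE (by norm_num)) (Fin.castLE (by norm_num))
      map_rel' := fun {a b} hab => by
        rcases a with a | a <;> rcases b with b | b <;> simp_all [K33, joinG] }
  exact isMinor_of_injective f <| Sum.map_injective.mpr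
    ⟨Fin.castLE_injective _, Fin.castLE_injective _⟩

end

end SimpleGraph

theorem stmt_7 {V : Type*} [Fintype V] (G : SimpleGraph V) (hG : Planar G) :
    PseudoPlanar G := by
  intro S _
  refine ⟨fun hne => ?_, ⟨fun e => hG.2 ?_⟩⟩
  · have : Nonempty (locSet G S) := hne.to_subtype
    obtain ⟨v, hv⟩ := SimpleGraph.exists_degree_le_five_of_not_isMinor (locG G S)
      fun h => hG.1 (h.map (SimpleGraph.Embedding.induce _))
    exact ⟨v, (SimpleGraph.deltaStarV_le_degree _ v).trans hv⟩
  · exact (SimpleGraph.isMinor_K33_joinG_twoK2.map e.symm.toEmbedding).map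
      (SimpleGraph.Embedding.induce _)
end
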